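/- arXiv:2305.15903 — 3 statements merged into one kernel-verified Lean document; each statement's English description precedes it below -/
import Mathlib

section
/- Let (Ω, μ) be a probability space and K ≥ 1. For each i ∈ {0, 1, ..., K} let ℓ_i : ℕ → Ω → ℝ be a sequence of measurable functions and let p_i ∈ ℝ. Define PIC_i(n, ω) = -2·ℓ_i(n, ω) + p_i·log n. Suppose that for each i ∈ {1, ..., K} either (a) there exists a real constant Δ_i > 0 such that the functions ω ↦ (ℓ_0(n, ω) - ℓ_i(n, ω))/n converge in measure (as n → ∞) to the constant function Δ_i, or (b) p_0 < p_i and the functions ω ↦ (ℓ_0(n, ω) - ℓ_i(n, ω))/log n converge in measure to the constant function 0. Then μ({ω : PIC_0(n, ω) < PIC_i(n, ω) for every i ∈ {1, ..., K}}) → 1 as n → ∞. -/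
/-!
The event that model `i` beats or ties the true model is `ℓ₀ - ℓᵢ ≤ c log n` with
`c = (p₀ - pᵢ) / 2`. In case (a) `c log n = o(n)`, so on this event `(ℓ₀ - ℓᵢ) / n` stays
`Δ / 2` away from `Δ`; in case (b) `c < 0`, so on it `(ℓ₀ - ℓᵢ) / log n ≤ c` stays `-c` away
from `0`. Either way convergence in measure sends its probability to `0`, and a union bound
over the finitely many alternatives finishes the proof.
-/

open MeasureTheory Filter Topology

namespace MeasureTheory

variable {ι α : Type*} [MeasurableSpace α] {μ : Measure α} {l : Filter ι}

lemma TendstoInMeasure.tendsto_measure_of_eventually_subset {E : Type*} [PseudoMetricSpace E]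
    {f : ι → α → E} {g : α → E} {s : ι → Set α} {ε : ℝ} (hf : TendstoInMeasure μ f l g)
    (hε : 0 < ε) (hs : ∀ᶠ i in l, s i ⊆ {x | ε ≤ dist (f i x) (g x)}) :
    Tendsto (fun i => μ (s i)) l (𝓝 0) :=
  tendsto_of_tendsto_of_tendsto_of_le_of_le' tendsto_const_nhds
    (tendstoInMeasure_iff_dist.mp hf ε hε) (.of_forall fun _ => zero_le)
    (hs.mono fun _ => measure_mono)

lemma tendsto_measure_biUnion_finset_of_tendsto {κ : Type*} (t : Finset κ)
    {s : κ → ι → Set α} (hs : ∀ k ∈ t, Tendsto (fun i => μ (s k i)) l (𝓝 0)) :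
    Tendsto (fun i => μ (⋃ k ∈ t, s k i)) l (𝓝 0) := by
  have hsum : Tendsto (fun i => ∑ k ∈ t, μ (s k i)) l (𝓝 0) := by
    simpa using tendsto_finsetSum t hs
  exact tendsto_of_tendsto_of_tendsto_of_le_of_le' tendsto_const_nhds hsum
    (.of_forall fun _ => zero_le) (.of_forall fun _ => measure_biUnion_finset_le t _)

lemma tendsto_measure_of_tendsto_measure_compl [IsProbabilityMeasure μ] {s : ι → Set α}
    (hs : Tendsto (fun i => μ (s i)ᶜ) l (𝓝 0)) : Tendsto (fun i => μ (s i)) l (𝓝 1) := by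
  have hlower : Tendsto (fun i => 1 - μ (s i)ᶜ) l (𝓝 1) := by
    simpa using ENNReal.Tendsto.sub tendsto_const_nhds hs (.inl ENNReal.one_ne_top)
  refine tendsto_of_tendsto_of_tendsto_of_le_of_le hlower tendsto_const_nhds (fun i => ?_)
    (fun _ => prob_le_one)
  rw [tsub_le_iff_right, ← measure_univ (μ := μ)]
  exact measure_univ_le_add_compl _

lemma tendsto_measure_setOf_forall_of_tendsto_measure_setOf_not [IsProbabilityMeasure μ]
    {κ : Type*} (t : Finset κ) {P : κ → ι → α → Prop}
    (hP : ∀ k ∈ t, Tendsto (fun i => μ {x | ¬ P k i x}) l (𝓝 0)) :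
    Tendsto (fun i => μ {x | ∀ k ∈ t, P k i x}) l (𝓝 1) := by
  refine tendsto_measure_of_tendsto_measure_compl ?_
  simpa only [Set.compl_ofPred, not_forall, Set.ofPred_exists] using
    tendsto_measure_biUnion_finset_of_tendsto t hP

lemma tendsto_measure_le_mul_log_of_tendstoInMeasure_div_natCast {D : ℕ → α → ℝ} {Δ : ℝ}
    (hΔ : 0 < Δ) (hD : TendstoInMeasure μ (fun n x => D n x / n) atTop (fun _ => Δ)) (c : ℝ) :
    Tendsto (fun n => μ {x | D n x ≤ c * Real.log n}) atTop (𝓝 0) := by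
  have hlog : ∀ᶠ n : ℕ in atTop, c * Real.log n ≤ Δ / 2 * n := by
    filter_upwards [((Real.isLittleO_log_id_atTop.const_mul_left c).comp_tendsto
      tendsto_natCast_atTop_atTop).def (half_pos hΔ)] with n hn
    simpa using (le_abs_self _).trans hn
  refine hD.tendsto_measure_of_eventually_subset (half_pos hΔ) ?_
  filter_upwards [hlog, eventually_gt_atTop 0] with n hn hn0 x (hx : D n x ≤ _)
  have hratio : D n x / n ≤ Δ / 2 := (div_le_iff₀ (by positivity)).2 (by linarith)
  rw [Set.mem_ofPred_eq, Real.dist_eq, abs_sub_comm]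
  exact (by linarith : Δ / 2 ≤ Δ - D n x / n).trans (le_abs_self _)

lemma tendsto_measure_le_mul_log_of_tendstoInMeasure_div_log {D : ℕ → α → ℝ} {c : ℝ}
    (hc : c < 0) (hD : TendstoInMeasure μ (fun n x => D n x / Real.log n) atTop (fun _ => 0)) :
    Tendsto (fun n => μ {x | D n x ≤ c * Real.log n}) atTop (𝓝 0) := by
  refine hD.tendsto_measure_of_eventually_subset (neg_pos.2 hc) ?_
  filter_upwards [eventually_gt_atTop 1] with n hn x (hx : D n x ≤ _)
  have hratio : D n x / Real.log n ≤ c :=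
    (div_le_iff₀ (Real.log_pos (by exact_mod_cast hn))).2 hx
  rw [Set.mem_ofPred_eq, Real.dist_eq, sub_zero]
  exact (neg_le_neg hratio).trans (neg_le_abs _)

end MeasureTheory

theorem pic_consistency_general
    {Ω : Type*} [MeasurableSpace Ω] (μ : Measure Ω) [IsProbabilityMeasure μ]
    (K : ℕ)
    (ℓ : ℕ → ℕ → Ω → ℝ) (p : ℕ → ℝ)
    (PIC : ℕ → ℕ → Ω → ℝ)
    (hPIC : ∀ i n ω, PIC i n ω = -2 * ℓ i n ω + p i * Real.log n)
    (hcases : ∀ i, 1 ≤ i → i ≤ K →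
      (∃ Δ : ℝ, 0 < Δ ∧
        TendstoInMeasure μ (fun n ω => (ℓ 0 n ω - ℓ i n ω) / (n : ℝ)) atTop
          (fun _ => Δ)) ∨
      (p 0 < p i ∧
        TendstoInMeasure μ (fun n ω => (ℓ 0 n ω - ℓ i n ω) / Real.log n) atTop
          (fun _ => (0 : ℝ)))) :
    Tendsto (fun n => μ {ω | ∀ i, 1 ≤ i → i ≤ K → PIC 0 n ω < PIC i n ω})
      atTop (𝓝 1) := by
  have hPIC_lt : ∀ i n ω,
      PIC 0 n ω < PIC i n ω ↔ ¬ ℓ 0 n ω - ℓ i n ω ≤ (p 0 - p i) / 2 * Real.log n := by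
    intro i n ω
    rw [hPIC, hPIC, not_le]
    constructor <;> intro h <;> linarith
  have hIcc : ∀ n ω, (∀ i, 1 ≤ i → i ≤ K → PIC 0 n ω < PIC i n ω) ↔
      ∀ i ∈ Finset.Icc 1 K, PIC 0 n ω < PIC i n ω := by
    simp only [Finset.mem_Icc, and_imp, implies_true]
  simp only [hIcc]
  refine tendsto_measure_setOf_forall_of_tendsto_measure_setOf_not _ fun i hi => ?_
  simp only [hPIC_lt, not_not]
  obtain ⟨hi1, hiK⟩ := Finset.mem_Icc.mp hi
  rcases hcases i hi1 hiK with ⟨Δ, hΔ, hgap⟩ | ⟨hp, hgap⟩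
  · exact tendsto_measure_le_mul_log_of_tendstoInMeasure_div_natCast hΔ hgap _
  · exact tendsto_measure_le_mul_log_of_tendstoInMeasure_div_log (by linarith) hgap

/-- Consistency of the PIC criterion (paper's Theorem 1): if every alternative model
either has a strictly positive expected log-likelihood gap (case (a)) or is a
strictly-less-parsimonious supermodel (case (b)), then the probability that the
true model (index 0) achieves the strictly smallest PIC among all candidates
tends to one. -/
theorem pic_consistency
    {Ω : Type*} [MeasurableSpace Ω] (μ : Measure Ω) [IsProbabilityMeasure μ]
    (K : ℕ) (hK : 1 ≤ K)
    (ℓ : ℕ → ℕ → Ω → ℝ) (p : ℕ → ℝ)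
    (hmeas : ∀ i, i ≤ K → ∀ n, Measurable (ℓ i n))
    (PIC : ℕ → ℕ → Ω → ℝ)
    (hPIC : ∀ i n ω, PIC i n ω = -2 * ℓ i n ω + p i * Real.log n)
    (hcases : ∀ i, 1 ≤ i → i ≤ K →
      (∃ Δ : ℝ, 0 < Δ ∧
        TendstoInMeasure μ (fun n ω => (ℓ 0 n ω - ℓ i n ω) / (n : ℝ)) atTop
          (fun _ => Δ)) ∨
      (p 0 < p i ∧
        TendstoInMeasure μ (fun n ω => (ℓ 0 n ω - ℓ i n ω) / Real.log n) atTop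
          (fun _ => (0 : ℝ)))) :
    Tendsto (fun n => μ {ω | ∀ i, 1 ≤ i → i ≤ K → PIC 0 n ω < PIC i n ω})
      atTop (𝓝 1) :=
  pic_consistency_general μ K ℓ p PIC hPIC hcases
end

section
/- Let ι be a nonempty finite index set, let i₀ ∈ ι, and let f : ι → ℕ → ℝ be such that for every i ∈ ι with i ≠ i₀, the sequence n ↦ f(i₀, n) - f(i, n) tends to -∞ as n → ∞. Then the sequence n ↦ exp(-f(i₀, n)/2) / Σ_{j ∈ ι} exp(-f(j, n)/2) tends to 1 as n → ∞. -/
open Filter Topology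

/-- If the criterion value of the model indexed by `i₀` eventually beats every
competitor's by an arbitrarily large margin, then its (softmax-type) posterior
model probability exp(-f i₀ n / 2) / Σ_j exp(-f j n / 2) converges to 1. -/
theorem posterior_weight_of_best_model_tendsto_one
    {ι : Type*} [Fintype ι] [Nonempty ι] (i₀ : ι) (f : ι → ℕ → ℝ)
    (h : ∀ i, i ≠ i₀ → Tendsto (fun n => f i₀ n - f i n) atTop atBot) :
    Tendsto (fun n => Real.exp (-(f i₀ n) / 2) / ∑ j, Real.exp (-(f j n) / 2))
      atTop (𝓝 1) := by
  classical
  have heq : ∀ n, Real.exp (-(f i₀ n) / 2) / ∑ j, Real.exp (-(f j n) / 2)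
      = 1 / ∑ j, Real.exp ((f i₀ n - f j n) / 2) := by
    intro n
    have hS : (0 : ℝ) < ∑ j, Real.exp (-(f j n) / 2) :=
      Finset.sum_pos (fun j _ => Real.exp_pos _) Finset.univ_nonempty
    have hsum : ∑ j, Real.exp ((f i₀ n - f j n) / 2)
        = Real.exp (f i₀ n / 2) * ∑ j, Real.exp (-(f j n) / 2) := by
      rw [Finset.mul_sum]
      refine Finset.sum_congr rfl fun j _ => ?_
      rw [← Real.exp_add]
      ring_nf
    rw [hsum, one_div, mul_inv, ← Real.exp_neg]
    field_simp
  simp only [heq]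
  have hsum : Tendsto (fun n => ∑ j, Real.exp ((f i₀ n - f j n) / 2)) atTop
      (𝓝 (∑ j : ι, if j = i₀ then (1:ℝ) else 0)) := by
    refine tendsto_finset_sum _ fun j _ => ?_
    by_cases hj : j = i₀
    · subst hj
      simp only [if_pos rfl, sub_self, zero_div, Real.exp_zero]
      exact tendsto_const_nhds
    · simp only [if_neg hj]
      have : Tendsto (fun n => (f i₀ n - f j n) / 2) atTop atBot :=
        (h j hj).atBot_div_const (by norm_num)
      exact Real.tendsto_exp_atBot.comp this
  have hone : (∑ j : ι, if j = i₀ then (1:ℝ) else 0) = 1 := by simp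
  rw [hone] at hsum
  have := (tendsto_const_nhds (x := (1:ℝ))).div hsum one_ne_zero
  simpa [Pi.div_def, one_div] using this
end

section
/- Let (Ω, μ) be a probability space and K ≥ 1. For each i ∈ {0, 1, ..., K} let ℓ_i : ℕ → Ω → ℝ be a sequence of measurable functions and let p_i ∈ ℝ. Define PIC_i(n, ω) = -2·ℓ_i(n, ω) + p_i·log n and the random posterior weights π_i(n, ω) = exp(-PIC_i(n, ω)/2) / Σ_{j=0}^{K} exp(-PIC_j(n, ω)/2). Suppose that for each i ∈ {1, ..., K} there exists a real constant Δ_i > 0 such that the functions ω ↦ (ℓ_0(n, ω) - ℓ_i(n, ω))/n converge in measure to the constant function Δ_i. Then for every ε ∈ (0, 1), μ({ω : π_0(n, ω) > 1 - ε}) → 1 as n → ∞. -/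
/-!
On the event where every normalised log-likelihood gap `(ℓ₀ - ℓᵢ)/n` exceeds `Δᵢ/2`, each ratio
`πᵢ/π₀ = exp ((ℓᵢ - ℓ₀) + (p₀ - pᵢ)/2 · log n)` is at most `exp (-n Δᵢ/2 + O(log n))`, which is
eventually below `ε/(K+1)`; there `π₀ > 1 - ε`. Convergence in measure makes each of the finitely
many complementary events negligible, so a union bound finishes the proof.
-/

open MeasureTheory Filter Topology Asymptotics Finset

theorem tendsto_neg_mul_add_mul_log_atBot {Δ : ℝ} (hΔ : 0 < Δ) (c : ℝ) :
    Tendsto (fun n : ℕ => -(n * Δ) + c * Real.log n) atTop atBot := by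
  have hlin : Tendsto (fun x : ℝ => -(x * Δ)) atTop atBot :=
    tendsto_neg_atTop_atBot.comp (tendsto_id.atTop_mul_const hΔ)
  have hid : (fun x : ℝ => x) =O[atTop] fun x => -(x * Δ) :=
    ((isBigO_refl _ _).const_mul_right' (isUnit_iff_ne_zero.2 (neg_ne_zero.2 hΔ.ne'))).congr_right
      fun x => by ring
  have hlog : (fun x : ℝ => c * Real.log x) =o[atTop] fun x => -(x * Δ) :=
    (Real.isLittleO_log_id_atTop.const_mul_left c).trans_isBigO hid
  exact ((IsEquivalent.refl.add_isLittleO hlog).symm.tendsto_atBot hlin).comp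
    tendsto_natCast_atTop_atTop

theorem one_sub_lt_exp_div_sum_exp {K : ℕ} {ε : ℝ} (hε : 0 < ε) (a : ℕ → ℝ)
    (ha : ∀ i ∈ Icc 1 K, a i - a 0 < Real.log (ε / (K + 1))) :
    1 - ε < Real.exp (a 0) / ∑ j ∈ range (K + 1), Real.exp (a j) := by
  have he₀ : 0 < Real.exp (a 0) := Real.exp_pos _
  have hterm : ∀ j ∈ range K, Real.exp (a (j + 1)) ≤ ε / (K + 1) * Real.exp (a 0) := by
    intro j hj
    have hlt := ha (j + 1) (mem_Icc.2 ⟨by omega, by simpa using hj⟩)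
    rw [← Real.exp_log (by positivity : 0 < ε / (K + 1)), ← Real.exp_add]
    exact Real.exp_le_exp.2 (by linarith)
  have hrest : ∑ j ∈ range K, Real.exp (a (j + 1)) ≤ K * (ε / (K + 1) * Real.exp (a 0)) := by
    simpa using sum_le_sum hterm
  have hrest₀ : 0 ≤ ∑ j ∈ range K, Real.exp (a (j + 1)) :=
    sum_nonneg fun j _ => (Real.exp_pos _).le
  have hK : (K : ℝ) * (ε / (K + 1)) < ε := by
    rw [mul_div_assoc', div_lt_iff₀ (by positivity)]
    linarith
  rw [sum_range_succ', lt_div_iff₀ (by positivity)]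
  nlinarith

theorem MeasureTheory.TendstoInMeasure.tendsto_measure_le_of_lt {Ω ι : Type*} [MeasurableSpace Ω]
    {μ : Measure Ω} {l : Filter ι} {f : ι → Ω → ℝ} {a c : ℝ}
    (hf : TendstoInMeasure μ f l fun _ => c) (hac : a < c) :
    Tendsto (fun i => μ {ω | f i ω ≤ a}) l (𝓝 0) := by
  refine tendsto_of_tendsto_of_tendsto_of_le_of_le tendsto_const_nhds
    (tendstoInMeasure_iff_dist.1 hf (c - a) (sub_pos.2 hac)) (fun _ => zero_le) fun i => ?_
  refine measure_mono fun ω (hω : f i ω ≤ a) => ?_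
  change c - a ≤ dist (f i ω) c
  rw [Real.dist_eq, abs_sub_comm]
  exact (sub_le_sub_left hω c).trans (le_abs_self _)

theorem tendsto_measure_le_neg_add_mul_log {Ω : Type*} [MeasurableSpace Ω] {μ : Measure Ω}
    {Y : ℕ → Ω → ℝ} {Δ : ℝ} (hY : TendstoInMeasure μ (fun n ω => Y n ω / n) atTop fun _ => Δ)
    (hΔ : 0 < Δ) (c L : ℝ) :
    Tendsto (fun n => μ {ω | L ≤ -Y n ω + c * Real.log n}) atTop (𝓝 0) := by
  have hdet : ∀ᶠ n : ℕ in atTop, -(n * (Δ / 2)) + c * Real.log n < L :=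
    (tendsto_neg_mul_add_mul_log_atBot (half_pos hΔ) c).eventually (eventually_lt_atBot L)
  refine tendsto_of_tendsto_of_tendsto_of_le_of_le' tendsto_const_nhds
    (hY.tendsto_measure_le_of_lt (half_lt_self hΔ)) (Eventually.of_forall fun _ => zero_le) ?_
  filter_upwards [hdet, eventually_gt_atTop 0] with n hn hn₀
  refine measure_mono fun ω (hω : L ≤ -Y n ω + c * Real.log n) => ?_
  change Y n ω / n ≤ Δ / 2
  rw [div_le_iff₀ (by exact_mod_cast hn₀)]
  linarith

theorem tendsto_measure_one_of_tendsto_measure_compl {Ω ι : Type*} [MeasurableSpace Ω]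
    {μ : Measure Ω} [IsProbabilityMeasure μ] {l : Filter ι} {s : ι → Set Ω}
    (hs : Tendsto (fun i => μ (s i)ᶜ) l (𝓝 0)) : Tendsto (fun i => μ (s i)) l (𝓝 1) := by
  have hlow : ∀ i, 1 - μ (s i)ᶜ ≤ μ (s i) := fun i => by
    rw [tsub_le_iff_right, ← measure_univ (μ := μ), ← Set.union_compl_self (s i)]
    exact measure_union_le _ _
  have hlim : Tendsto (fun i => 1 - μ (s i)ᶜ) l (𝓝 1) := by
    simpa using ENNReal.Tendsto.sub tendsto_const_nhds hs (Or.inl ENNReal.one_ne_top)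
  exact tendsto_of_tendsto_of_tendsto_of_le_of_le hlim tendsto_const_nhds hlow
    fun _ => prob_le_one

theorem posterior_prob_of_true_model_tendsto_one_in_prob_general
    {Ω : Type*} [MeasurableSpace Ω] (μ : Measure Ω) [IsProbabilityMeasure μ]
    (K : ℕ)
    (ℓ : ℕ → ℕ → Ω → ℝ) (p : ℕ → ℝ)
    (PIC : ℕ → ℕ → Ω → ℝ)
    (hPIC : ∀ i n ω, PIC i n ω = -2 * ℓ i n ω + p i * Real.log n)
    (pw : ℕ → ℕ → Ω → ℝ)
    (hpw : ∀ i n ω, pw i n ω =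
      Real.exp (-(PIC i n ω) / 2) /
        ∑ j ∈ Finset.range (K + 1), Real.exp (-(PIC j n ω) / 2))
    (hΔ : ∀ i, 1 ≤ i → i ≤ K → ∃ Δ : ℝ, 0 < Δ ∧
      TendstoInMeasure μ (fun n ω => (ℓ 0 n ω - ℓ i n ω) / (n : ℝ)) atTop
        (fun _ => Δ)) :
    ∀ ε : ℝ, 0 < ε → ε < 1 →
      Tendsto (fun n => μ {ω | 1 - ε < pw 0 n ω}) atTop (𝓝 1) := by
  intro ε hε _
  set L := Real.log (ε / (K + 1))
  let bad i n := {ω | L ≤ -(PIC i n ω) / 2 - -(PIC 0 n ω) / 2}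
  have hgap : ∀ i n ω, -(PIC i n ω) / 2 - -(PIC 0 n ω) / 2
      = -(ℓ 0 n ω - ℓ i n ω) + (p 0 - p i) / 2 * Real.log n := fun i n ω => by
    rw [hPIC, hPIC]; ring
  have hbad : ∀ i ∈ Icc 1 K, Tendsto (fun n => μ (bad i n)) atTop (𝓝 0) := by
    intro i hi
    obtain ⟨Δ, hΔpos, hlim⟩ := hΔ i (mem_Icc.1 hi).1 (mem_Icc.1 hi).2
    simpa only [bad, hgap] using tendsto_measure_le_neg_add_mul_log hlim hΔpos _ L
  have hcover : ∀ n, {ω | 1 - ε < pw 0 n ω}ᶜ ⊆ ⋃ i ∈ Icc 1 K, bad i n := by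
    intro n ω hω
    contrapose! hω
    simp only [Set.mem_iUnion, not_exists, bad] at hω
    rw [Set.notMem_compl_iff, Set.mem_ofPred_eq, hpw]
    exact one_sub_lt_exp_div_sum_exp hε (fun i => -(PIC i n ω) / 2) fun i hi => by
      simpa using hω i hi
  refine tendsto_measure_one_of_tendsto_measure_compl <|
    tendsto_of_tendsto_of_tendsto_of_le_of_le tendsto_const_nhds ?_ (fun _ => zero_le)
      fun n => (measure_mono (hcover n)).trans (measure_biUnion_finset_le _ _)
  simpa using tendsto_finsetSum _ hbad

/-- Under the separated case of the consistency hypotheses (strictly positive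
expected log-likelihood gaps Δ_i for all alternatives), the Laplace-approximated
posterior model probability π_0 of the true model converges to 1 in probability. -/
theorem posterior_prob_of_true_model_tendsto_one_in_prob
    {Ω : Type*} [MeasurableSpace Ω] (μ : Measure Ω) [IsProbabilityMeasure μ]
    (K : ℕ) (hK : 1 ≤ K)
    (ℓ : ℕ → ℕ → Ω → ℝ) (p : ℕ → ℝ)
    (hmeas : ∀ i, i ≤ K → ∀ n, Measurable (ℓ i n))
    (PIC : ℕ → ℕ → Ω → ℝ)
    (hPIC : ∀ i n ω, PIC i n ω = -2 * ℓ i n ω + p i * Real.log n)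
    (pw : ℕ → ℕ → Ω → ℝ)
    (hpw : ∀ i n ω, pw i n ω =
      Real.exp (-(PIC i n ω) / 2) /
        ∑ j ∈ Finset.range (K + 1), Real.exp (-(PIC j n ω) / 2))
    (hΔ : ∀ i, 1 ≤ i → i ≤ K → ∃ Δ : ℝ, 0 < Δ ∧
      TendstoInMeasure μ (fun n ω => (ℓ 0 n ω - ℓ i n ω) / (n : ℝ)) atTop
        (fun _ => Δ)) :
    ∀ ε : ℝ, 0 < ε → ε < 1 →
      Tendsto (fun n => μ {ω | 1 - ε < pw 0 n ω}) atTop (𝓝 1) :=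
  posterior_prob_of_true_model_tendsto_one_in_prob_general μ K ℓ p PIC hPIC pw hpw hΔ
end
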